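/- Let f : ℝ^d → ℝ^d be the planar-flow transformation f(x)_i = x_i + γ_i · tanh(∑_j w_j x_j + b), where γ, w ∈ ℝ^d and b ∈ ℝ. If ∑_i γ_i w_i ≥ -1, then f is injective. -/

import Mathlib

/-!
Write the flow as `f x = x + tanh (ℓ x + b) • γ` with `ℓ x = ∑ⱼ wⱼ xⱼ`. Applying `ℓ` shows that
`s = ℓ x + b` satisfies `ℓ (f x) + b = s + c · tanh s` with `c = ℓ γ = ∑ᵢ γᵢ wᵢ`, and `x` is recovered
from `f x` once `s` is known. For `c ≥ 0` the scalar map `s ↦ s + c · tanh s` is strictly increasing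
because `tanh` is; for `-1 ≤ c < 0` it is the sum `(1 + c) s + (-c) (s - tanh s)`, and `s - tanh s`
is strictly increasing since its derivative `tanh² s` vanishes only at `0`.
-/

open Function Real

namespace Real

theorem hasDerivAt_tanh (x : ℝ) : HasDerivAt tanh (1 - tanh x ^ 2) x := by
  have h := (hasDerivAt_sinh x).div (hasDerivAt_cosh x) (cosh_pos x).ne'
  rw [show tanh = sinh / cosh from funext tanh_eq_sinh_div_cosh]
  refine h.congr_deriv ?_
  rw [Pi.div_apply]
  field_simp

theorem tanh_strictMono : StrictMono tanh :=
  strictMono_of_hasDerivAt_pos hasDerivAt_tanh fun x => sub_pos.2 (tanh_sq_lt_one x)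

theorem strictMono_sub_tanh : StrictMono fun x => x - tanh x := by
  refine strictMono_of_odd_strictMonoOn_nonneg (fun x => by simp only [tanh_neg]; ring) ?_
  refine strictMonoOn_of_hasDerivWithinAt_pos (convex_Ici 0)
    (fun x _ => ((hasDerivAt_id x).sub (hasDerivAt_tanh x)).continuousAt.continuousWithinAt)
    (fun x _ => ((hasDerivAt_id x).sub (hasDerivAt_tanh x)).hasDerivWithinAt) fun x hx => ?_
  rw [interior_Ici] at hx
  have : 0 < tanh x := tanh_zero ▸ tanh_strictMono hx
  nlinarith

end Real

theorem strictMono_add_mul_tanh {c : ℝ} (hc : -1 ≤ c) : StrictMono fun t => t + c * tanh t := by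
  rcases le_or_gt 0 c with hc₀ | hc₀
  · exact strictMono_id.add_monotone (tanh_strictMono.monotone.const_mul hc₀)
  · have h : StrictMono fun t => (1 + c) * t + -c * (t - tanh t) :=
      (monotone_id.const_mul (by linarith)).add_strictMono
        (strictMono_sub_tanh.const_mul (by linarith))
    convert h using 2 with t
    ring

section PlanarFlow

variable {R E : Type*} [Ring R] [AddCommGroup E] [Module R E]

def planarFlow (ℓ : E →ₗ[R] R) (b : R) (u : E) (φ : R → R) (x : E) : E :=
  x + φ (ℓ x + b) • u

theorem planarFlow_injective_of_injective {ℓ : E →ₗ[R] R} {u : E} {φ : R → R}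
    (hφ : Injective fun s => s + φ s * ℓ u) (b : R) : Injective (planarFlow ℓ b u φ) := by
  intro x y hxy
  have hℓ : ℓ x + b = ℓ y + b := hφ <| by
    have := congrArg ℓ hxy
    simp only [planarFlow, map_add, map_smul, smul_eq_mul] at this
    simp only [add_right_comm _ b, this]
  simpa [planarFlow, hℓ] using hxy

end PlanarFlow

/-- Invertibility of the planar flow with tanh nonlinearity when ∑ γᵢwᵢ ≥ -1. -/
theorem planar_flow_injective (d : ℕ) (γ w : Fin d → ℝ) (b : ℝ)
    (h : -1 ≤ ∑ i, γ i * w i) :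
    Function.Injective (fun x : Fin d → ℝ =>
      fun i => x i + γ i * Real.tanh ((∑ j, w j * x j) + b)) := by
  have hφ : Injective fun s => s + tanh s * (dotProductBilin ℝ ℝ w) γ := by
    simpa [dotProduct, mul_comm] using (strictMono_add_mul_tanh h).injective
  convert planarFlow_injective_of_injective hφ b using 1
  ext x i
  simp [planarFlow, dotProduct, mul_comm]
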